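/- arXiv:2008.06090 — 16 statements merged into one kernel-verified Lean document; each statement's English description precedes it below -/
import Mathlib

section
/- Let K be a graded r-submodule of the graded R-module M. Then every homogeneous element of the ideal (K :_R M) belongs to Z(M), i.e., h(R) ∩ (K :_R M) ⊆ Z(M). -/
/-!
Setting: `R` is a commutative ring graded by a group `ι` (written additively),
`M` is a graded `R`-module.  `𝒜 g` / `ℳ g` are the homogeneous components,
`SetLike.IsHomogeneousElem` expresses membership in `h(R)` resp. `h(M)`.
-/

open Pointwise

variable {ι : Type*} [DecidableEq ι] [AddGroup ι]
variable {R : Type*} [CommRing R] {M : Type*} [AddCommGroup M] [Module R M]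
variable (𝒜 : ι → AddSubgroup R) (ℳ : ι → AddSubgroup M)
variable [GradedRing 𝒜] [DirectSum.Decomposition ℳ] [SetLike.GradedSMul 𝒜 ℳ]

/-- A submodule `K` of `M` is graded if the homogeneous components of each of its
elements belong to `K`. -/
def IsGradedSub (K : Submodule R M) : Prop :=
  ∀ x ∈ K, ∀ i, (DirectSum.decompose ℳ x i : M) ∈ K

/-- An ideal `I` of `R` is graded if the homogeneous components of each of its
elements belong to `I`. -/
def IsGradedIdl (I : Ideal R) : Prop :=
  ∀ x ∈ I, ∀ i, (DirectSum.decompose 𝒜 x i : R) ∈ I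

/-- A proper graded submodule `K` of `M` is a graded `r`-submodule if whenever
`a ∈ h(R)` and `x ∈ h(M)` satisfy `a • x ∈ K` and `Ann_M(a) = {0}`, then `x ∈ K`. -/
def IsGrRSubmodule (K : Submodule R M) : Prop :=
  K ≠ ⊤ ∧ IsGradedSub ℳ K ∧
    ∀ a : R, ∀ x : M, SetLike.IsHomogeneousElem 𝒜 a → SetLike.IsHomogeneousElem ℳ x →
      a • x ∈ K → (∀ m : M, a • m = 0 → m = 0) → x ∈ K

/-- A proper graded submodule `K` of `M` is graded prime if whenever `a ∈ h(R)` and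
`x ∈ h(M)` satisfy `a • x ∈ K`, then `x ∈ K` or `a ∈ (K :_R M)`. -/
def IsGrPrimeSubmodule (K : Submodule R M) : Prop :=
  K ≠ ⊤ ∧ IsGradedSub ℳ K ∧
    ∀ a : R, ∀ x : M, SetLike.IsHomogeneousElem 𝒜 a → SetLike.IsHomogeneousElem ℳ x →
      a • x ∈ K → x ∈ K ∨ ∀ m : M, a • m ∈ K

/-- A proper graded submodule `K` of `M` is a graded special `r`-submodule if whenever
`a ∈ h(R)` and `x ∈ h(M)` satisfy `a • x ∈ K` and `Ann_R(x) = {0}`, then `a ∈ (K :_R M)`. -/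
def IsGrSpecialRSubmodule (K : Submodule R M) : Prop :=
  K ≠ ⊤ ∧ IsGradedSub ℳ K ∧
    ∀ a : R, ∀ x : M, SetLike.IsHomogeneousElem 𝒜 a → SetLike.IsHomogeneousElem ℳ x →
      a • x ∈ K → (∀ r : R, r • x = 0 → r = 0) → ∀ m : M, a • m ∈ K

theorem DirectSum.Decomposition.mem_of_forall_homogeneous_mem {ι M σ P : Type*} [DecidableEq ι]
    [AddCommMonoid M] [SetLike σ M] [AddSubmonoidClass σ M] {ℳ : ι → σ}
    [DirectSum.Decomposition ℳ] [SetLike P M] [AddSubmonoidClass P M] {K : P}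
    (hK : ∀ i, ∀ x ∈ ℳ i, x ∈ K) (x : M) : x ∈ K :=
  DirectSum.Decomposition.inductionOn ℳ (zero_mem K) (fun {i} x ↦ hK i x x.2)
    (fun _ _ ↦ add_mem) x

-- A homogeneous `a` with trivial annihilator and `a • M ⊆ K` would force every homogeneous
-- element into `K`, hence `K = M`.
theorem stmt0 (K : Submodule R M) (hK : IsGrRSubmodule 𝒜 ℳ K) :
    ∀ a : R, SetLike.IsHomogeneousElem 𝒜 a → (∀ m : M, a • m ∈ K) →
      ∃ m : M, m ≠ 0 ∧ a • m = 0 := by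
  intro a ha haK
  by_contra! hreg
  obtain ⟨hK_ne_top, -, hK_r⟩ := hK
  refine hK_ne_top (eq_top_iff.2 fun x _ ↦ ?_)
  refine DirectSum.Decomposition.mem_of_forall_homogeneous_mem (ℳ := ℳ) (fun i x hx ↦ ?_) x
  exact hK_r a x ha ⟨i, hx⟩ (haK x) fun m hm ↦ by_contra fun hm0 ↦ hreg m hm0 hm
end

section
/- Let K be a graded prime R-submodule of the graded R-module M. Then K is a graded r-submodule of M if and only if h(R) ∩ (K :_R M) ⊆ Z(M). -/
/-!
Setting: `R` is a commutative ring graded by a group `ι` (written additively),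
`M` is a graded `R`-module.  `𝒜 g` / `ℳ g` are the homogeneous components,
`SetLike.Homogeneous` expresses membership in `h(R)` resp. `h(M)`.
-/

open Pointwise

variable {ι : Type*} [DecidableEq ι] [AddGroup ι]
variable {R : Type*} [CommRing R] {M : Type*} [AddCommGroup M] [Module R M]
variable (𝒜 : ι → AddSubgroup R) (ℳ : ι → AddSubgroup M)
variable [GradedRing 𝒜] [DirectSum.Decomposition ℳ] [SetLike.GradedSMul 𝒜 ℳ]

open DirectSum SetLike

omit [AddGroup ι] in
theorem Submodule.mem_of_forall_decompose_mem (K : Submodule R M) {x : M}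
    (hx : ∀ i, (decompose ℳ x i : M) ∈ K) : x ∈ K := by
  classical
  rw [← sum_support_decompose ℳ x]
  exact K.sum_mem fun i _ => hx i

omit [AddGroup ι] [GradedRing 𝒜] [GradedSMul 𝒜 ℳ] in
variable {𝒜 ℳ} in
/-- If a homogeneous `a` with `Ann_M(a) = 0` lay in `(K :_R M)`, the `r`-property would put every
homogeneous component of every element of `M` into `K`, forcing `K = M`. -/
theorem IsGrRSubmodule.exists_ne_zero_smul_eq_zero {K : Submodule R M}
    (hK : IsGrRSubmodule 𝒜 ℳ K) {a : R} (ha : IsHomogeneousElem 𝒜 a)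
    (haK : ∀ m : M, a • m ∈ K) : ∃ m : M, m ≠ 0 ∧ a • m = 0 := by
  obtain ⟨hKtop, -, hKr⟩ := hK
  by_contra! hann
  have hann' : ∀ m : M, a • m = 0 → m = 0 := fun m hm => not_not.1 fun hm0 => hann m hm0 hm
  refine hKtop (eq_top_iff.2 fun x _ => K.mem_of_forall_decompose_mem ℳ fun i => ?_)
  exact hKr a _ ha ⟨i, (decompose ℳ x i).2⟩ (haK _) hann'

omit [AddGroup ι] [GradedRing 𝒜] [GradedSMul 𝒜 ℳ] in
variable {𝒜 ℳ} in
theorem IsGrPrimeSubmodule.isGrRSubmodule {K : Submodule R M} (hK : IsGrPrimeSubmodule 𝒜 ℳ K)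
    (hZ : ∀ a : R, IsHomogeneousElem 𝒜 a → (∀ m : M, a • m ∈ K) → ∃ m : M, m ≠ 0 ∧ a • m = 0) :
    IsGrRSubmodule 𝒜 ℳ K := by
  obtain ⟨hKtop, hKgr, hKp⟩ := hK
  refine ⟨hKtop, hKgr, fun a x ha hx haxK hann => (hKp a x ha hx haxK).resolve_right fun haK => ?_⟩
  obtain ⟨m, hm0, hm⟩ := hZ a ha haK
  exact hm0 (hann m hm)

theorem stmt1 (K : Submodule R M) (hK : IsGrPrimeSubmodule 𝒜 ℳ K) :
    IsGrRSubmodule 𝒜 ℳ K ↔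
      ∀ a : R, SetLike.IsHomogeneousElem 𝒜 a → (∀ m : M, a • m ∈ K) →
        ∃ m : M, m ≠ 0 ∧ a • m = 0 :=
  ⟨fun hr _ ha haK => hr.exists_ne_zero_smul_eq_zero ha haK, hK.isGrRSubmodule⟩
end

section
/- If R is a G-graded ring that is an integral domain, then the zero ideal {0} is the unique graded r-ideal of R. -/
/-!
Setting: `R` is a commutative ring graded by a group `ι` (written additively),
with homogeneous components `𝒜 g`.
-/

variable {ι : Type*} [DecidableEq ι] [AddGroup ι]
variable {R : Type*} [CommRing R]
variable (𝒜 : ι → AddSubgroup R) [GradedRing 𝒜]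

def IsGrRIdeal (P : Ideal R) : Prop :=
  P ≠ ⊤ ∧ IsGradedIdl 𝒜 P ∧
    ∀ a b : R, SetLike.IsHomogeneousElem 𝒜 a → SetLike.IsHomogeneousElem 𝒜 b →
      a * b ∈ P → (∀ r : R, r * a = 0 → r = 0) → b ∈ P

/-!
A graded `r`-ideal cannot contain a homogeneous non-zero-divisor `a`: from `a * 1 ∈ P` it would
contain `1`. A nonzero graded ideal contains a nonzero homogeneous element, which in a domain is a
non-zero-divisor, so the only candidate is `⊥`; and `⊥` is a graded `r`-ideal in any nontrivial
graded ring, because `a * b = 0` with `a` a non-zero-divisor forces `b = 0`.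
-/

open nonZeroDivisors

variable {𝒜}

theorem IsGradedIdl.exists_isHomogeneousElem_ne_zero_mem {I : Ideal R} (hI : IsGradedIdl 𝒜 I)
    (hI_ne : I ≠ ⊥) : ∃ a, SetLike.IsHomogeneousElem 𝒜 a ∧ a ≠ 0 ∧ a ∈ I := by
  obtain ⟨x, hxI, hx0⟩ := Submodule.exists_mem_ne_zero_of_ne_bot hI_ne
  obtain ⟨i, hi⟩ : ∃ i, DirectSum.decompose 𝒜 x i ≠ 0 := by
    by_contra! h
    exact hx0 ((DirectSum.decompose 𝒜).injective (by ext i; simp [h]))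
  exact ⟨_, ⟨i, SetLike.coe_mem _⟩, by simpa using hi, hI x hxI i⟩

theorem IsGrRIdeal.notMem_of_mem_nonZeroDivisors {P : Ideal R} (hP : IsGrRIdeal 𝒜 P) {a : R}
    (ha : SetLike.IsHomogeneousElem 𝒜 a) (ha0 : a ∈ R⁰) : a ∉ P := fun haP =>
  hP.1 <| (Ideal.eq_top_iff_one P).mpr <|
    hP.2.2 a 1 ha ⟨0, SetLike.one_mem_graded 𝒜⟩ (by simpa using haP)
      (mem_nonZeroDivisors_iff_right.mp ha0)

variable (𝒜)

theorem isGrRIdeal_bot [Nontrivial R] : IsGrRIdeal 𝒜 (⊥ : Ideal R) := by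
  refine ⟨bot_ne_top, fun x hx i => ?_, fun a b _ _ hab ha => ?_⟩
  · simp [Ideal.mem_bot.mp hx]
  · exact ha b (by rwa [mul_comm, ← Ideal.mem_bot])

/-- If `R` is a graded integral domain, then the zero ideal is the
unique graded `r`-ideal of `R`. -/
theorem stmt2 [IsDomain R] :
    ∀ P : Ideal R, IsGrRIdeal 𝒜 P ↔ P = ⊥ := by
  intro P
  refine ⟨fun hP => ?_, fun hP => hP ▸ isGrRIdeal_bot 𝒜⟩
  by_contra hP_ne
  obtain ⟨a, ha, ha0, haP⟩ := hP.2.1.exists_isHomogeneousElem_ne_zero_mem hP_ne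
  exact hP.notMem_of_mem_nonZeroDivisors ha (mem_nonZeroDivisors_of_ne_zero ha0) haP
end

section
/- Let K be a proper graded R-submodule of the graded R-module M. Then K is a graded r-submodule of M if and only if a·M ∩ K = a·K for every a ∈ h(R) with a ∉ Z(M). -/
/-!
Setting: `R` is a commutative ring graded by a group `ι` (written additively),
`M` is a graded `R`-module.  `𝒜 g` / `ℳ g` are the homogeneous components,
`SetLike.Homogeneous` expresses membership in `h(R)` resp. `h(M)`.
-/

open Pointwise

variable {ι : Type*} [DecidableEq ι] [AddGroup ι]
variable {R : Type*} [CommRing R] {M : Type*} [AddCommGroup M] [Module R M]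
variable (𝒜 : ι → AddSubgroup R) (ℳ : ι → AddSubgroup M)
variable [GradedRing 𝒜] [DirectSum.Decomposition ℳ] [SetLike.GradedSMul 𝒜 ℳ]

/-! A homogeneous `a` of degree `g` maps the degree-`i` component of `m` onto the degree-`g + i`
component of `a • m`. Hence, for a graded `K`, testing `a • x ∈ K → x ∈ K` on homogeneous `x`
suffices, and for `a` regular that implication is exactly `a • M ⊓ K = a • K`. -/

section Pointwise

variable {R M : Type*} [CommSemiring R] [AddCommMonoid M] [Module R M]

theorem Submodule.smul_top_inf_eq_smul_iff {a : R} (ha : IsSMulRegular M a) (K : Submodule R M) :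
    a • (⊤ : Submodule R M) ⊓ K = a • K ↔ ∀ x : M, a • x ∈ K → x ∈ K := by
  constructor
  · intro h x hx
    have hmem : a • x ∈ a • K := h ▸ ⟨Submodule.smul_mem_pointwise_smul x a ⊤ trivial, hx⟩
    obtain ⟨k, hk, hka⟩ := (Submodule.mem_smul_pointwise_iff_exists _ _ _).1 hmem
    exact ha hka ▸ hk
  · intro h
    refine le_antisymm ?_ fun _ hx => ?_
    · rintro _ ⟨hx, hxK⟩
      obtain ⟨x, -, rfl⟩ := (Submodule.mem_smul_pointwise_iff_exists _ _ _).1 hx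
      exact Submodule.smul_mem_pointwise_smul x a K (h x hxK)
    · obtain ⟨k, hk, rfl⟩ := (Submodule.mem_smul_pointwise_iff_exists _ _ _).1 hx
      exact ⟨Submodule.smul_mem_pointwise_smul k a ⊤ trivial, K.smul_mem a hk⟩

end Pointwise

section Graded

variable {ι R M σ τ : Type*} [DecidableEq ι] [AddLeftCancelMonoid ι]

theorem DirectSum.coe_decompose_smul_add_of_left_mem [Semiring R] [AddCommMonoid M] [Module R M]
    [SetLike σ R] [SetLike τ M] [AddSubmonoidClass τ M] {𝒜 : ι → σ} (ℳ : ι → τ)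
    [DirectSum.Decomposition ℳ] [SetLike.GradedSMul 𝒜 ℳ] {g : ι} {a : R} (ha : a ∈ 𝒜 g)
    (m : M) (i : ι) :
    (DirectSum.decompose ℳ (a • m) (g + i) : M) = a • (DirectSum.decompose ℳ m i : M) := by
  induction m using DirectSum.Decomposition.inductionOn ℳ with
  | zero => simp
  | @homogeneous j m =>
    have ham : a • (m : M) ∈ ℳ (g + j) := SetLike.GradedSMul.smul_mem ha m.2
    by_cases hij : j = i
    · subst hij
      rw [DirectSum.decompose_of_mem_same ℳ ham, DirectSum.decompose_coe, DirectSum.of_eq_same]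
    · rw [DirectSum.decompose_of_mem_ne ℳ ham (by simpa using hij),
        DirectSum.decompose_of_mem_ne ℳ m.2 hij, smul_zero]
  | add x y hx hy =>
    simp only [smul_add, DirectSum.decompose_add, DirectSum.add_apply, AddMemClass.coe_add, hx, hy]

theorem IsGradedSub.mem_of_smul_mem [CommRing R] [AddCommGroup M] [Module R M] [SetLike σ R]
    {𝒜 : ι → σ} {ℳ : ι → AddSubgroup M} [DirectSum.Decomposition ℳ] [SetLike.GradedSMul 𝒜 ℳ]
    {K : Submodule R M} (hK : IsGradedSub ℳ K) {a : R} (ha : SetLike.IsHomogeneousElem 𝒜 a)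
    (h : ∀ x : M, SetLike.IsHomogeneousElem ℳ x → a • x ∈ K → x ∈ K) {x : M} (hx : a • x ∈ K) :
    x ∈ K := by
  classical
  obtain ⟨g, ha⟩ := ha
  rw [← DirectSum.sum_support_decompose ℳ x]
  refine Submodule.sum_mem K fun i _ => h _ ⟨i, (DirectSum.decompose ℳ x i).2⟩ ?_
  rw [← DirectSum.coe_decompose_smul_add_of_left_mem ℳ ha]
  exact hK _ hx (g + i)

end Graded

theorem stmt3 (K : Submodule R M) (hKtop : K ≠ ⊤) (hKgr : IsGradedSub ℳ K) :
    IsGrRSubmodule 𝒜 ℳ K ↔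
      ∀ a : R, SetLike.IsHomogeneousElem 𝒜 a → (∀ m : M, a • m = 0 → m = 0) →
        (a • (⊤ : Submodule R M)) ⊓ K = a • K := by
  refine ⟨fun ⟨_, _, hr⟩ a ha hreg => ?_, fun h => ⟨hKtop, hKgr, fun a x ha _ hax hreg => ?_⟩⟩
  · refine (K.smul_top_inf_eq_smul_iff (IsSMulRegular.of_right_eq_zero_of_smul hreg)).2 ?_
    exact fun x => hKgr.mem_of_smul_mem ha fun y hy hay => hr a y ha hy hay hreg
  · exact (K.smul_top_inf_eq_smul_iff (IsSMulRegular.of_right_eq_zero_of_smul hreg)).1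
      (h a ha hreg) x hax
end

section
/- Every graded pure R-submodule of the graded R-module M is a graded r-submodule of M. -/
/-!
Setting: `R` is a commutative ring graded by a group `ι` (written additively),
`M` is a graded `R`-module.  `𝒜 g` / `ℳ g` are the homogeneous components,
`SetLike.Homogeneous` expresses membership in `h(R)` resp. `h(M)`.
-/

open Pointwise

variable {ι : Type*} [DecidableEq ι] [AddGroup ι]
variable {R : Type*} [CommRing R] {M : Type*} [AddCommGroup M] [Module R M]
variable (𝒜 : ι → AddSubgroup R) (ℳ : ι → AddSubgroup M)
variable [GradedRing 𝒜] [DirectSum.Decomposition ℳ] [SetLike.GradedSMul 𝒜 ℳ]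

theorem Submodule.mem_of_smul_mem_of_smul_top_inf_eq {K : Submodule R M} {a : R} {x : M}
    (hpure : a • (⊤ : Submodule R M) ⊓ K = a • K) (hax : a • x ∈ K)
    (ha : ∀ m : M, a • m = 0 → m = 0) : x ∈ K := by
  have hax' : a • x ∈ a • K := by
    rw [← hpure]
    exact ⟨Submodule.smul_mem_pointwise_smul x a ⊤ Submodule.mem_top, hax⟩
  obtain ⟨k, hk, hak⟩ := Submodule.mem_smul_pointwise_iff_exists _ _ _ |>.mp hax'
  have hxk : x - k = 0 := ha _ (by rw [smul_sub, hak, sub_self])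
  rwa [sub_eq_zero.mp hxk]

theorem stmt4 (K : Submodule R M) (hKtop : K ≠ ⊤) (hKgr : IsGradedSub ℳ K)
    (hpure : ∀ a : R, SetLike.IsHomogeneousElem 𝒜 a →
      (a • (⊤ : Submodule R M)) ⊓ K = a • K) :
    IsGrRSubmodule 𝒜 ℳ K :=
  ⟨hKtop, hKgr, fun a _ ha _ hax hinj =>
    Submodule.mem_of_smul_mem_of_smul_top_inf_eq (hpure a ha) hax hinj⟩
end

section
/- Let K be a proper graded R-submodule of the graded R-module M. Then K is a graded r-submodule of M if and only if (K :_M a) = K for every a ∈ h(R) with a ∉ Z(M), where (K :_M a) = {m ∈ M : a·m ∈ K}. -/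
/-!
Setting: `R` is a commutative ring graded by a group `ι` (written additively),
`M` is a graded `R`-module.  `𝒜 g` / `ℳ g` are the homogeneous components,
`SetLike.IsHomogeneousElem` expresses membership in `h(R)` resp. `h(M)`.
-/

open Pointwise

variable {ι : Type*} [DecidableEq ι] [AddGroup ι]
variable {R : Type*} [CommRing R] {M : Type*} [AddCommGroup M] [Module R M]
variable (𝒜 : ι → AddSubgroup R) (ℳ : ι → AddSubgroup M)
variable [GradedRing 𝒜] [DirectSum.Decomposition ℳ] [SetLike.GradedSMul 𝒜 ℳ]

/-!
A homogeneous `a` of degree `g` sends the degree-`i` component of `m` to the degree-`(g + i)`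
component of `a • m`. Hence, for a graded `K`, `a • m ∈ K` puts every `a • mᵢ` in `K`, so the
`r`-condition, which only speaks about homogeneous elements, already gives `(K :_M a) = K`.
-/

namespace DirectSum

variable {κ A N σ τ : Type*} [DecidableEq κ] [AddMonoid κ] [IsLeftCancelAdd κ]
  [SetLike σ A] [AddCommMonoid N] [SetLike τ N] [AddSubmonoidClass τ N] [DistribSMul A N]
  {𝒮 : κ → σ} {𝒩 : κ → τ} [Decomposition 𝒩] [SetLike.GradedSMul 𝒮 𝒩]

theorem coe_decompose_smul_add_of_mem {g : κ} {a : A} (ha : a ∈ 𝒮 g) (m : N) (i : κ) :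
    (decompose 𝒩 (a • m) (g + i) : N) = a • (decompose 𝒩 m i : N) := by
  induction m using Decomposition.inductionOn 𝒩 with
  | zero => simp
  | @homogeneous j x =>
    have hax : a • (x : N) ∈ 𝒩 (g + j) := SetLike.GradedSMul.smul_mem ha x.2
    by_cases hji : j = i
    · subst hji
      rw [decompose_of_mem_same 𝒩 hax, decompose_of_mem_same 𝒩 x.2]
    · rw [decompose_of_mem_ne 𝒩 hax (by simpa using hji), decompose_of_mem_ne 𝒩 x.2 hji,
        smul_zero]
  | add x y hx hy =>
    simp only [smul_add, decompose_add, add_apply, AddMemClass.coe_add, hx, hy]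

theorem SetLike.IsHomogeneous.mem_of_smul_mem {P : Type*} [SetLike P N] [AddSubmonoidClass P N]
    {K : P} (hK : SetLike.IsHomogeneous 𝒩 K) {g : κ} {a : A} (ha : a ∈ 𝒮 g)
    (h : ∀ x, SetLike.IsHomogeneousElem 𝒩 x → a • x ∈ K → x ∈ K) {m : N} (hm : a • m ∈ K) :
    m ∈ K := by
  refine (AddSubmonoidClass.IsHomogeneous.mem_iff 𝒩 K hK).2 fun i ↦
    h _ ⟨i, (decompose 𝒩 m i).2⟩ ?_
  rw [← coe_decompose_smul_add_of_mem ha]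
  exact hK _ hm

end DirectSum

theorem stmt6 (K : Submodule R M) (hKtop : K ≠ ⊤) (hKgr : IsGradedSub ℳ K) :
    IsGrRSubmodule 𝒜 ℳ K ↔
      ∀ a : R, SetLike.IsHomogeneousElem 𝒜 a → (∀ m : M, a • m = 0 → m = 0) →
        {m : M | a • m ∈ K} = (K : Set M) := by
  have hK : DirectSum.SetLike.IsHomogeneous ℳ K := fun i m hm ↦ hKgr m hm i
  constructor
  · rintro ⟨-, -, hr⟩ a ⟨g, ha⟩ hreg
    ext m
    exact ⟨hK.mem_of_smul_mem ha fun x hx hax ↦ hr a x ⟨g, ha⟩ hx hax hreg, K.smul_mem a⟩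
  · intro hcolon
    refine ⟨hKtop, hKgr, fun a x ha _ hax hreg ↦ ?_⟩
    rw [← SetLike.mem_coe, ← hcolon a ha hreg]
    exact hax
end

section
/- Let a ∈ h(R) with a ∉ Ann_R(M) (i.e., a·M ≠ {0}). Then Ann_M(a) = {m ∈ M : a·m = 0} is a graded r-submodule of M. -/
/-!
Setting: `R` is a commutative ring graded by a group `ι` (written additively),
`M` is a graded `R`-module.  `𝒜 g` / `ℳ g` are the homogeneous components,
`SetLike.Homogeneous` expresses membership in `h(R)` resp. `h(M)`.
-/

open Pointwise

variable {ι : Type*} [DecidableEq ι] [AddGroup ι]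
variable {R : Type*} [CommRing R] {M : Type*} [AddCommGroup M] [Module R M]
variable (𝒜 : ι → AddSubgroup R) (ℳ : ι → AddSubgroup M)
variable [GradedRing 𝒜] [DirectSum.Decomposition ℳ] [SetLike.GradedSMul 𝒜 ℳ]

/-- The annihilator `Ann_M(a) = {m ∈ M : a • m = 0}` as a submodule of `M`. -/
def annMod (a : R) : Submodule R M where
  carrier := {m : M | a • m = 0}
  add_mem' := by
    intro x y hx hy
    simp only [Set.mem_setOf_eq, smul_add] at *
    rw [hx, hy, add_zero]
  zero_mem' := by simp
  smul_mem' := by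
    intro c x hx
    simp only [Set.mem_setOf_eq] at *
    rw [smul_comm, hx, smul_zero]

theorem coe_decompose_smul_add_of_mem {ι R M S σ : Type*} [DecidableEq ι] [AddLeftCancelMonoid ι]
    [SetLike S R] [AddCommMonoid M] [DistribSMul R M] [SetLike σ M] [AddSubmonoidClass σ M]
    {𝒜 : ι → S} {ℳ : ι → σ} [DirectSum.Decomposition ℳ] [SetLike.GradedSMul 𝒜 ℳ]
    {g : ι} {a : R} (ha : a ∈ 𝒜 g) (x : M) (i : ι) :
    (DirectSum.decompose ℳ (a • x) (g + i) : M) = a • (DirectSum.decompose ℳ x i : M) := by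
  induction x using DirectSum.Decomposition.inductionOn ℳ with
  | zero => simp
  | @homogeneous j x =>
    obtain ⟨x, hx⟩ := x
    have hax : a • x ∈ ℳ (g + j) := SetLike.GradedSMul.smul_mem ha hx
    rcases eq_or_ne i j with rfl | hij
    · rw [DirectSum.decompose_of_mem_same ℳ hax, DirectSum.decompose_of_mem_same ℳ hx]
    · rw [DirectSum.decompose_of_mem_ne ℳ hax (fun h => hij (add_left_cancel h).symm),
        DirectSum.decompose_of_mem_ne ℳ hx hij.symm, smul_zero]
  | add x y hx hy =>
    simp only [smul_add, DirectSum.decompose_add, DirectSum.add_apply, AddMemClass.coe_add, hx, hy]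

theorem annMod_ne_top {R M : Type*} [CommRing R] [AddCommGroup M] [Module R M] {a : R}
    (haM : ¬ ∀ m : M, a • m = 0) : annMod a ≠ (⊤ : Submodule R M) :=
  fun h => haM fun m => (h ▸ Submodule.mem_top : m ∈ annMod a)

theorem isGradedSub_annMod {ι R M S : Type*} [DecidableEq ι] [AddGroup ι] [CommRing R]
    [AddCommGroup M] [Module R M] [SetLike S R] {𝒜 : ι → S} (ℳ : ι → AddSubgroup M)
    [DirectSum.Decomposition ℳ] [SetLike.GradedSMul 𝒜 ℳ] {a : R}
    (ha : SetLike.IsHomogeneousElem 𝒜 a) : IsGradedSub ℳ (annMod (M := M) a) := by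
  obtain ⟨g, hg⟩ := ha
  intro x (hx : a • x = 0) i
  change a • (DirectSum.decompose ℳ x i : M) = 0
  rw [← coe_decompose_smul_add_of_mem hg, hx, DirectSum.decompose_zero, DirectSum.zero_apply,
    ZeroMemClass.coe_zero]

theorem stmt7 (a : R) (ha : SetLike.IsHomogeneousElem 𝒜 a)
    (haM : ¬ ∀ m : M, a • m = 0) :
    IsGrRSubmodule 𝒜 ℳ (annMod (M := M) a) := by
  refine ⟨annMod_ne_top haM, isGradedSub_annMod ℳ ha, fun b x _ _ hbx hb => hb _ ?_⟩
  change a • b • x = 0 at hbx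
  rwa [smul_comm]
end

section
/- Suppose the zero submodule {0} is the only graded r-submodule of the graded R-module M. Then {0} is a graded prime R-submodule of M. -/
/-!
If `a ∈ h(R)` does not annihilate `M`, then `Ann_M(a) = Submodule.torsionBy R M a` is a proper
graded submodule, and it is an `r`-submodule: for `b` regular on `M`, `a • b • y = b • a • y = 0`
forces `a • y = 0`. By hypothesis it is therefore `{0}`, so `a • x = 0` gives `x = 0`.
-/

/-!
Setting: `R` is a commutative ring graded by a group `ι` (written additively),
`M` is a graded `R`-module.  `𝒜 g` / `ℳ g` are the homogeneous components,
`SetLike.Homogeneous` expresses membership in `h(R)` resp. `h(M)`.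
-/

open Pointwise

variable {ι : Type*} [DecidableEq ι] [AddGroup ι]
variable {R : Type*} [CommRing R] {M : Type*} [AddCommGroup M] [Module R M]
variable (𝒜 : ι → AddSubgroup R) (ℳ : ι → AddSubgroup M)
variable [GradedRing 𝒜] [DirectSum.Decomposition ℳ] [SetLike.GradedSMul 𝒜 ℳ]

section

variable {ι R M σ τ : Type*} [DecidableEq ι] [Add ι] [IsLeftCancelAdd ι] [Semiring R]
  [AddCommMonoid M] [Module R M] [SetLike σ R] [SetLike τ M] [AddSubmonoidClass τ M]
  (𝒜 : ι → σ) (ℳ : ι → τ) [DirectSum.Decomposition ℳ] [SetLike.GradedSMul 𝒜 ℳ]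

theorem DirectSum.coe_decompose_smul_of_mem {a : R} {g : ι} (ha : a ∈ 𝒜 g) (m : M) (j : ι) :
    (decompose ℳ (a • m) (g + j) : M) = a • (decompose ℳ m j : M) := by
  induction m using DirectSum.Decomposition.inductionOn ℳ with
  | zero => simp
  | @homogeneous i x =>
    have hax : a • (x : M) ∈ ℳ (g + i) := SetLike.GradedSMul.smul_mem ha x.2
    by_cases hij : i = j
    · subst hij
      rw [decompose_of_mem_same ℳ x.2, decompose_of_mem_same ℳ hax]
    · rw [decompose_of_mem_ne ℳ x.2 hij, decompose_of_mem_ne ℳ hax (mt add_left_cancel hij),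
        smul_zero]
  | add m m' hm hm' =>
    simp only [smul_add, decompose_add, add_apply, AddMemClass.coe_add, hm, hm']

end

section

variable {ι R M : Type*} [DecidableEq ι] [Add ι] [IsLeftCancelAdd ι] [CommRing R]
  [AddCommGroup M] [Module R M] (𝒜 : ι → AddSubgroup R) (ℳ : ι → AddSubgroup M)
  [DirectSum.Decomposition ℳ] [SetLike.GradedSMul 𝒜 ℳ]

theorem isGradedSub_torsionBy {a : R} (ha : SetLike.IsHomogeneousElem 𝒜 a) :
    IsGradedSub ℳ (Submodule.torsionBy R M a) := by
  obtain ⟨g, hg⟩ := ha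
  intro m hm j
  rw [Submodule.mem_torsionBy_iff] at hm ⊢
  rw [← DirectSum.coe_decompose_smul_of_mem 𝒜 ℳ hg, hm, DirectSum.decompose_zero,
    DirectSum.zero_apply, ZeroMemClass.coe_zero]

theorem isGrRSubmodule_torsionBy {a : R} (ha : SetLike.IsHomogeneousElem 𝒜 a)
    (hne : Submodule.torsionBy R M a ≠ ⊤) : IsGrRSubmodule 𝒜 ℳ (Submodule.torsionBy R M a) := by
  refine ⟨hne, isGradedSub_torsionBy 𝒜 ℳ ha, fun b y _ _ hby hb => ?_⟩
  rw [Submodule.mem_torsionBy_iff] at hby ⊢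
  exact hb _ (by rw [smul_comm, hby])

end

theorem stmt8
    (h : ∀ K : Submodule R M, IsGrRSubmodule 𝒜 ℳ K ↔ K = ⊥) :
    IsGrPrimeSubmodule 𝒜 ℳ (⊥ : Submodule R M) := by
  obtain ⟨hne, hgr, -⟩ := (h ⊥).mpr rfl
  refine ⟨hne, hgr, fun a x ha _ hax => ?_⟩
  rw [Submodule.mem_bot] at hax
  by_cases htop : Submodule.torsionBy R M a = ⊤
  · right
    intro m
    simpa using (Submodule.mem_torsionBy_iff a m).mp (htop ▸ Submodule.mem_top)
  · left
    rw [← (h _).mp (isGrRSubmodule_torsionBy 𝒜 ℳ ha htop)]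
    exact (Submodule.mem_torsionBy_iff a x).mpr hax
end

section
/- Let K be a proper graded R-submodule of the graded R-module M. Then K is a graded r-submodule of M if and only if the following holds: for every graded ideal P of R and every graded R-submodule N of M such that P·N ⊆ K and P contains some element of h(R) not in Z(M), one has N ⊆ K. -/
/-!
Setting: `R` is a commutative ring graded by a group `ι` (written additively),
`M` is a graded `R`-module.  `𝒜 g` / `ℳ g` are the homogeneous components,
`SetLike.IsHomogeneousElem` expresses membership in `h(R)` resp. `h(M)`.
-/

open Pointwise

variable {ι : Type*} [DecidableEq ι] [AddGroup ι]
variable {R : Type*} [CommRing R] {M : Type*} [AddCommGroup M] [Module R M]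
variable (𝒜 : ι → AddSubgroup R) (ℳ : ι → AddSubgroup M)
variable [GradedRing 𝒜] [DirectSum.Decomposition ℳ] [SetLike.GradedSMul 𝒜 ℳ]

/-!
If `a ∈ P` is homogeneous and `Ann_M(a) = 0`, then `a • x_i ∈ P • N ⊆ K` for every homogeneous
component `x_i` of an element of `N`, so the `r`-property puts each `x_i`, hence `N`, in `K`.
Conversely, given homogeneous `a, x` with `a • x ∈ K` and `Ann_M(a) = 0`, apply the criterion to
`P = (a)` and `N = (K :_M a) = {m | a • m ∈ K}`: since `a` is homogeneous of degree `g`, the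
component of `a • m` of degree `g + i` is `a • m_i`, so `(K :_M a)` is graded along with `K`.
-/

namespace DirectSum

theorem coe_decompose_smul_add_of_left_mem_s9 {ιA σA σM A N : Type*} [DecidableEq ιA]
    [AddLeftCancelMonoid ιA] [Semiring A] [AddCommMonoid N] [Module A N] [SetLike σA A]
    [SetLike σM N] [AddSubmonoidClass σM N] (𝒜 : ιA → σA) (ℳ : ιA → σM) [Decomposition ℳ]
    [SetLike.GradedSMul 𝒜 ℳ] {a : A} {i j : ιA} (ha : a ∈ 𝒜 i) (m : N) :
    (decompose ℳ (a • m) (i + j) : N) = a • (decompose ℳ m j : N) := by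
  induction m using Decomposition.inductionOn ℳ with
  | zero => simp
  | @homogeneous k m =>
    have ham : a • (m : N) ∈ ℳ (i + k) := SetLike.GradedSMul.smul_mem ha m.2
    by_cases hkj : k = j
    · subst hkj
      rw [decompose_of_mem_same ℳ ham, decompose_of_mem_same ℳ m.2]
    · have hik : i + k ≠ i + j := fun h => hkj (add_left_cancel h)
      rw [decompose_of_mem_ne ℳ ham hik, decompose_of_mem_ne ℳ m.2 hkj, smul_zero]
  | add x y hx hy => simp [decompose_add, hx, hy, smul_add]

end DirectSum

namespace Submodule

theorem IsHomogeneous.comap_lsmul {ιA σA σM A N : Type*} [DecidableEq ιA]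
    [AddLeftCancelMonoid ιA] [CommSemiring A] [AddCommMonoid N] [Module A N] [SetLike σA A]
    [SetLike σM N] [AddSubmonoidClass σM N] {𝒜 : ιA → σA} {ℳ : ιA → σM}
    [DirectSum.Decomposition ℳ] [SetLike.GradedSMul 𝒜 ℳ] {K : Submodule A N}
    (hK : K.IsHomogeneous ℳ) {a : A} {i : ιA} (ha : a ∈ 𝒜 i) :
    (K.comap (LinearMap.lsmul A N a)).IsHomogeneous ℳ := by
  intro j x hx
  have := hK (i + j) hx
  rwa [LinearMap.lsmul_apply, DirectSum.coe_decompose_smul_add_of_left_mem_s9 𝒜 ℳ ha] at this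

theorem span_singleton_smul_comap_lsmul_le {A N : Type*} [CommSemiring A] [AddCommMonoid N]
    [Module A N] (K : Submodule A N) (a : A) :
    Ideal.span {a} • K.comap (LinearMap.lsmul A N a) ≤ K := by
  refine smul_le.2 fun r hr m hm => ?_
  obtain ⟨c, rfl⟩ := Ideal.mem_span_singleton'.1 hr
  rw [mul_smul]
  exact K.smul_mem c hm

theorem IsHomogeneous.le_of_smul_le {ιA σM A N : Type*} [DecidableEq ιA] [CommSemiring A]
    [AddCommMonoid N] [Module A N] [SetLike σM N] [AddSubmonoidClass σM N] {ℳ : ιA → σM}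
    [DirectSum.Decomposition ℳ] {P : Ideal A} {K L : Submodule A N} (hL : L.IsHomogeneous ℳ)
    (hPL : P • L ≤ K) {a : A} (haP : a ∈ P) (hcancel : ∀ i, ∀ x ∈ ℳ i, a • x ∈ K → x ∈ K) :
    L ≤ K := by
  classical
  intro x hx
  rw [← DirectSum.sum_support_decompose ℳ x]
  exact K.sum_mem fun i _ => hcancel i _ (SetLike.coe_mem _)
    (hPL (smul_mem_smul haP (hL i hx)))

end Submodule

theorem stmt9 (K : Submodule R M) (hKtop : K ≠ ⊤) (hKgr : IsGradedSub ℳ K) :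
    IsGrRSubmodule 𝒜 ℳ K ↔
      ∀ (P : Ideal R) (N : Submodule R M), IsGradedIdl 𝒜 P → IsGradedSub ℳ N →
        P • N ≤ K →
        (∃ a ∈ P, SetLike.IsHomogeneousElem 𝒜 a ∧ ∀ m : M, a • m = 0 → m = 0) →
        N ≤ K := by
  constructor
  · rintro ⟨-, -, hK⟩ P N - hN hPN ⟨a, haP, ha, hreg⟩
    exact Submodule.IsHomogeneous.le_of_smul_le (fun i x hx => hN x hx i) hPN haP
      fun i x hx hax => hK a x ha ⟨i, hx⟩ hax hreg
  · refine fun h => ⟨hKtop, hKgr, fun a x ⟨g, hag⟩ _ hax hreg => ?_⟩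
    have hspan : IsGradedIdl 𝒜 (Ideal.span {a}) := fun y hy i =>
      Ideal.homogeneous_span 𝒜 {a} (by simpa using ⟨g, hag⟩) i hy
    have hcolon := Submodule.IsHomogeneous.comap_lsmul (fun i y hy => hKgr y hy i) hag
    exact h _ _ hspan (fun y hy i => hcolon i hy) (K.span_singleton_smul_comap_lsmul_le a)
      ⟨a, Ideal.mem_span_singleton_self a, ⟨g, hag⟩, hreg⟩ hax
end

section
/- Let K and N be graded r-submodules of the graded R-module M and let P be a graded ideal of R containing some element of h(R) not in Z(M). If P·K = P·N, then K = N. -/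
/-!
Setting: `R` is a commutative ring graded by a group `ι` (written additively),
`M` is a graded `R`-module.  `𝒜 g` / `ℳ g` are the homogeneous components,
`SetLike.Homogeneous` expresses membership in `h(R)` resp. `h(M)`.
-/

open Pointwise

variable {ι : Type*} [DecidableEq ι] [AddGroup ι]
variable {R : Type*} [CommRing R] {M : Type*} [AddCommGroup M] [Module R M]
variable (𝒜 : ι → AddSubgroup R) (ℳ : ι → AddSubgroup M)
variable [GradedRing 𝒜] [DirectSum.Decomposition ℳ] [SetLike.GradedSMul 𝒜 ℳ]

set_option linter.unusedSectionVars false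

theorem IsGradedSub.le_of_homogeneous_mem {K N : Submodule R M} (hK : IsGradedSub ℳ K)
    (h : ∀ x ∈ K, SetLike.IsHomogeneousElem ℳ x → x ∈ N) : K ≤ N := by
  classical
  intro x hx
  rw [← DirectSum.sum_support_decompose ℳ x]
  exact N.sum_mem fun i _ => h _ (hK x hx i) ⟨i, (DirectSum.decompose ℳ x i).2⟩

theorem IsGrRSubmodule.le_of_smul_mem {K N : Submodule R M} (hK : IsGradedSub ℳ K)
    (hN : IsGrRSubmodule 𝒜 ℳ N) {a : R} (ha : SetLike.IsHomogeneousElem 𝒜 a)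
    (ha_reg : ∀ m : M, a • m = 0 → m = 0) (hKN : ∀ x ∈ K, a • x ∈ N) : K ≤ N :=
  IsGradedSub.le_of_homogeneous_mem ℳ hK fun x hx hx_hom =>
    hN.2.2 a x ha hx_hom (hKN x hx) ha_reg

theorem IsGrRSubmodule.le_of_ideal_smul_le {K N : Submodule R M} (hK : IsGrRSubmodule 𝒜 ℳ K)
    (hN : IsGrRSubmodule 𝒜 ℳ N) {P : Ideal R}
    (hPa : ∃ a ∈ P, SetLike.IsHomogeneousElem 𝒜 a ∧ ∀ m : M, a • m = 0 → m = 0)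
    (hPKN : P • K ≤ P • N) : K ≤ N := by
  obtain ⟨a, haP, ha, ha_reg⟩ := hPa
  exact hN.le_of_smul_mem 𝒜 ℳ hK.2.1 ha ha_reg fun x hx =>
    Submodule.smul_le_right (hPKN (Submodule.smul_mem_smul haP hx))

theorem stmt10 (K N : Submodule R M)
    (hK : IsGrRSubmodule 𝒜 ℳ K) (hN : IsGrRSubmodule 𝒜 ℳ N)
    (P : Ideal R)
    (hPa : ∃ a ∈ P, SetLike.IsHomogeneousElem 𝒜 a ∧ ∀ m : M, a • m = 0 → m = 0)
    (hPKN : P • K = P • N) : K = N :=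
  le_antisymm (hK.le_of_ideal_smul_le 𝒜 ℳ hN hPa hPKN.le)
    (hN.le_of_ideal_smul_le 𝒜 ℳ hK hPa hPKN.ge)
end

section
/- Let K be a proper graded R-submodule of the graded R-module M such that h(R) ∩ (K :_R M) ⊆ Z(M). If K is not a graded r-submodule of M, then there exist a graded ideal P of R and a graded R-submodule N of M such that P contains some element of h(R) not in Z(M), K ⊊ N, (K :_R M) ⊊ P, and P·N ⊆ K. -/
/-!
Setting: `R` is a commutative ring graded by a group `ι` (written additively),
`M` is a graded `R`-module.  `𝒜 g` / `ℳ g` are the homogeneous components,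
`SetLike.IsHomogeneousElem` expresses membership in `h(R)` resp. `h(M)`.
-/

open Pointwise

variable {ι : Type*} [DecidableEq ι] [AddGroup ι]
variable {R : Type*} [CommRing R] {M : Type*} [AddCommGroup M] [Module R M]
variable (𝒜 : ι → AddSubgroup R) (ℳ : ι → AddSubgroup M)
variable [GradedRing 𝒜] [DirectSum.Decomposition ℳ] [SetLike.GradedSMul 𝒜 ℳ]

/-! A failure of the `r`-property gives homogeneous `a`, `x` with `a • x ∈ K`,
`x ∉ K` and `a` regular on `M`.  Take `N = K + R x` and `P = (K :_R N)`.  Then `a ∈ P`, and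
since homogeneous elements of `(K :_R M)` are zero divisors, `a ∉ (K :_R M)`. -/

theorem coe_decompose_smul_of_mem (r : R) {x : M} {g : ι} (hx : x ∈ ℳ g) (i : ι) :
    (DirectSum.decompose ℳ (r • x) i : M) = (DirectSum.decompose 𝒜 r (i - g) : R) • x := by
  classical
  have hterm : ∀ j, (DirectSum.decompose ℳ ((DirectSum.decompose 𝒜 r j : R) • x) i : M)
      = if j = i - g then (DirectSum.decompose 𝒜 r j : R) • x else 0 := by
    intro j
    have hmem : (DirectSum.decompose 𝒜 r j : R) • x ∈ ℳ (j + g) :=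
      SetLike.GradedSMul.smul_mem (SetLike.coe_mem (DirectSum.decompose 𝒜 r j)) hx
    split_ifs with h
    · subst h
      rw [sub_add_cancel] at hmem
      exact DirectSum.decompose_of_mem_same ℳ hmem
    · exact DirectSum.decompose_of_mem_ne ℳ hmem fun hc => h (eq_sub_of_add_eq hc)
  nth_rewrite 1 [← DirectSum.sum_support_decompose 𝒜 r]
  rw [Finset.sum_smul, DirectSum.decompose_sum, DFinsupp.finsetSum_apply,
    AddSubmonoidClass.coe_finsetSum, Finset.sum_congr rfl fun j _ => hterm j,
    Finset.sum_ite_eq']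
  split_ifs with hs
  · rfl
  · rw [DFinsupp.notMem_support_iff.mp hs, ZeroMemClass.coe_zero, zero_smul]

omit [AddGroup ι] in
theorem IsGradedSub.sup {K N : Submodule R M} (hK : IsGradedSub ℳ K) (hN : IsGradedSub ℳ N) :
    IsGradedSub ℳ (K ⊔ N) := by
  intro y hy i
  obtain ⟨k, hk, n, hn, rfl⟩ := Submodule.mem_sup.mp hy
  rw [DirectSum.decompose_add, DirectSum.add_apply, AddMemClass.coe_add]
  exact add_mem (Submodule.mem_sup_left (hK k hk i)) (Submodule.mem_sup_right (hN n hn i))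

include 𝒜 in
theorem isGradedSub_span_singleton {x : M} (hx : SetLike.IsHomogeneousElem ℳ x) :
    IsGradedSub ℳ (Submodule.span R {x}) := by
  obtain ⟨g, hxg⟩ := hx
  intro y hy i
  obtain ⟨r, rfl⟩ := Submodule.mem_span_singleton.mp hy
  rw [coe_decompose_smul_of_mem 𝒜 ℳ r hxg]
  exact Submodule.smul_mem _ _ (Submodule.mem_span_singleton_self x)

-- For `m ∈ ℳ j`, `rᵢ • m` is the degree-`(i + j)` component of `r • m`.
theorem IsGradedSub.isGradedIdl_colon {K N : Submodule R M} (hK : IsGradedSub ℳ K)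
    (hN : IsGradedSub ℳ N) : IsGradedIdl 𝒜 (K.colon N) := by
  classical
  intro r hr i
  rw [Submodule.mem_colon] at hr ⊢
  have hhom : ∀ j, ∀ m ∈ N, m ∈ ℳ j → (DirectSum.decompose 𝒜 r i : R) • m ∈ K := by
    intro j m hmN hmj
    have h := hK _ (hr m hmN) (i + j)
    rwa [coe_decompose_smul_of_mem 𝒜 ℳ r hmj, add_sub_cancel_right] at h
  intro n hn
  rw [← DirectSum.sum_support_decompose ℳ n, Finset.smul_sum]
  exact Submodule.sum_mem K fun j _ => hhom j _ (hN n hn j) (SetLike.coe_mem _)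

theorem Submodule.colon_sup_span_singleton {R M : Type*} [CommSemiring R] [AddCommMonoid M]
    [Module R M] (K : Submodule R M) (x : M) :
    K.colon ↑(K ⊔ span R {x}) = K.colon {x} := by
  rw [← span_eq K, ← span_union, colon_span, colon_union, span_eq,
    (colon_eq_top_iff_subset _).mpr subset_rfl, top_inf_eq]

omit [AddGroup ι] [GradedRing 𝒜] [SetLike.GradedSMul 𝒜 ℳ] in
theorem exists_of_not_isGrRSubmodule {K : Submodule R M} (hKtop : K ≠ ⊤)
    (hKgr : IsGradedSub ℳ K) (hnot : ¬ IsGrRSubmodule 𝒜 ℳ K) :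
    ∃ a x, SetLike.IsHomogeneousElem 𝒜 a ∧ SetLike.IsHomogeneousElem ℳ x ∧ a • x ∈ K ∧
      (∀ m : M, a • m = 0 → m = 0) ∧ x ∉ K := by
  by_contra! h
  exact hnot ⟨hKtop, hKgr, h⟩

theorem stmt11 (K : Submodule R M) (hKtop : K ≠ ⊤) (hKgr : IsGradedSub ℳ K)
    (hcol : ∀ a : R, SetLike.IsHomogeneousElem 𝒜 a → a ∈ K.colon ⊤ →
      ∃ m : M, m ≠ 0 ∧ a • m = 0)
    (hnot : ¬ IsGrRSubmodule 𝒜 ℳ K) :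
    ∃ (P : Ideal R) (N : Submodule R M), IsGradedIdl 𝒜 P ∧ IsGradedSub ℳ N ∧
      (∃ a ∈ P, SetLike.IsHomogeneousElem 𝒜 a ∧ ∀ m : M, a • m = 0 → m = 0) ∧
      K < N ∧ K.colon ⊤ < P ∧ P • N ≤ K := by
  obtain ⟨a, x, ha, hx, haxK, hreg, hxK⟩ := exists_of_not_isGrRSubmodule 𝒜 ℳ hKtop hKgr hnot
  set N := K ⊔ Submodule.span R {x}
  have hNgr : IsGradedSub ℳ N := hKgr.sup ℳ (isGradedSub_span_singleton 𝒜 ℳ hx)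
  have haP : a ∈ K.colon N := by
    rwa [Submodule.colon_sup_span_singleton, Submodule.mem_colon_singleton]
  have haK : a ∉ K.colon ⊤ := fun haK => by
    obtain ⟨m, hm0, hm⟩ := hcol a ha haK
    exact hm0 (hreg m hm)
  refine ⟨K.colon N, N, hKgr.isGradedIdl_colon 𝒜 ℳ hNgr, hNgr, ⟨a, haP, ha, hreg⟩, ?_, ?_, ?_⟩
  · exact left_lt_sup.mpr fun h => hxK (Submodule.span_singleton_le_iff_mem x K |>.mp h)
  · exact lt_of_le_of_ne (Submodule.colon_mono le_rfl (Set.subset_univ _))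
      fun h => haK (h ▸ haP)
  · exact Submodule.smul_le.mpr fun r hr n hn => Submodule.mem_colon.mp hr n hn
end

section
/- Let K be a graded prime R-submodule of the graded R-module M. Then K is a graded special r-submodule of M if and only if h(M) ∩ K ⊆ T(M). -/
/-!
Setting: `R` is a commutative ring graded by a group `ι` (written additively),
`M` is a graded `R`-module.  `𝒜 g` / `ℳ g` are the homogeneous components,
`SetLike.Homogeneous` expresses membership in `h(R)` resp. `h(M)`.
-/

open Pointwise

variable {ι : Type*} [DecidableEq ι] [AddGroup ι]
variable {R : Type*} [CommRing R] {M : Type*} [AddCommGroup M] [Module R M]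
variable (𝒜 : ι → AddSubgroup R) (ℳ : ι → AddSubgroup M)
variable [GradedRing 𝒜] [DirectSum.Decomposition ℳ] [SetLike.GradedSMul 𝒜 ℳ]

section

variable {𝒜 ℳ}

omit [SetLike.GradedSMul 𝒜 ℳ] in
theorem IsGrSpecialRSubmodule.exists_ne_zero_smul_eq_zero {K : Submodule R M}
    (hK : IsGrSpecialRSubmodule 𝒜 ℳ K) {x : M} (hxK : x ∈ K)
    (hx : SetLike.IsHomogeneousElem ℳ x) : ∃ r : R, r ≠ 0 ∧ r • x = 0 := by
  obtain ⟨hne, -, hsp⟩ := hK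
  by_contra! htf
  have hann : ∀ r : R, r • x = 0 → r = 0 := fun r hrx => by_contra (htf r · hrx)
  have hcolon := hsp 1 x (SetLike.isHomogeneousElem_one 𝒜) hx (by rwa [one_smul]) hann
  exact hne (Submodule.eq_top_iff'.2 fun m => by simpa using hcolon m)

omit [AddGroup ι] [GradedRing 𝒜] [SetLike.GradedSMul 𝒜 ℳ] in
theorem IsGrPrimeSubmodule.isGrSpecialRSubmodule {K : Submodule R M}
    (hK : IsGrPrimeSubmodule 𝒜 ℳ K)
    (htor : ∀ x ∈ K, SetLike.IsHomogeneousElem ℳ x → ∃ r : R, r ≠ 0 ∧ r • x = 0) :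
    IsGrSpecialRSubmodule 𝒜 ℳ K := by
  obtain ⟨hne, hgr, hpr⟩ := hK
  refine ⟨hne, hgr, fun a x ha hx haxK hann => ?_⟩
  rcases hpr a x ha hx haxK with hxK | hcolon
  · obtain ⟨r, hr0, hrx⟩ := htor x hxK hx
    exact absurd (hann r hrx) hr0
  · exact hcolon

end

theorem stmt13 (K : Submodule R M) (hK : IsGrPrimeSubmodule 𝒜 ℳ K) :
    IsGrSpecialRSubmodule 𝒜 ℳ K ↔
      ∀ x ∈ K, SetLike.IsHomogeneousElem ℳ x → ∃ r : R, r ≠ 0 ∧ r • x = 0 :=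
  ⟨fun hsp _ hxK hx => hsp.exists_ne_zero_smul_eq_zero hxK hx, hK.isGrSpecialRSubmodule⟩
end

section
/- Let K be a proper graded R-submodule of the graded R-module M. The following are equivalent: (1) K is a graded special r-submodule of M; (2) R·x ∩ K = (K :_R M)·x for every x ∈ h(M) with x ∉ T(M); (3) (K :_R M) = (K :_R x) for every x ∈ h(M) with x ∉ T(M), where (K :_R x) = {r ∈ R : r·x ∈ K}. -/
/-!
Setting: `R` is a commutative ring graded by a group `ι` (written additively),
`M` is a graded `R`-module.  `𝒜 g` / `ℳ g` are the homogeneous components,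
`SetLike.Homogeneous` expresses membership in `h(R)` resp. `h(M)`.
-/

open Pointwise

variable {ι : Type*} [DecidableEq ι] [AddGroup ι]
variable {R : Type*} [CommRing R] {M : Type*} [AddCommGroup M] [Module R M]
variable (𝒜 : ι → AddSubgroup R) (ℳ : ι → AddSubgroup M)
variable [GradedRing 𝒜] [DirectSum.Decomposition ℳ] [SetLike.GradedSMul 𝒜 ℳ]

/-!
If `x` is homogeneous, the components of `r • x` are the `rᵢ • x`, so for a graded `K` the
condition `r • x ∈ K` passes to every homogeneous component `rᵢ` of `r`; the special `r`-property
applied to each `rᵢ` gives `r ∈ (K :_R M)`, which is (1) ⇒ (3), and (3) ⇒ (1) is immediate.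
When `Ann(x) = 0` the map `r ↦ r • x` is injective, so `R • x ∩ K = (K :_R M) • x` says exactly
that `(K :_R M)` is the full preimage `(K :_R x)` of `K`: this is (2) ⇔ (3).
-/

theorem Set.range_inter_eq_image_iff {α β : Type*} {f : α → β} (hf : Function.Injective f)
    (S : Set β) (I : Set α) : Set.range f ∩ S = f '' I ↔ I = f ⁻¹' S := by
  rw [← Set.image_preimage_eq_range_inter, (Set.image_injective.mpr hf).eq_iff, eq_comm]

theorem smul_left_injective_of_forall_smul_eq_zero {x : M} (hx : ∀ r : R, r • x = 0 → r = 0) :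
    Function.Injective fun r : R => r • x :=
  (injective_iff_map_eq_zero (LinearMap.toSpanSingleton R M x)).mpr hx

theorem DirectSum.coe_decompose_smul_add_of_right_mem {g : ι} {x : M} (hx : x ∈ ℳ g) (r : R)
    (i : ι) : (DirectSum.decompose ℳ (r • x) (i + g) : M) = (DirectSum.decompose 𝒜 r i : R) • x := by
  induction r using DirectSum.Decomposition.inductionOn 𝒜 with
  | zero => simp
  | @homogeneous j a =>
    have hmem : (a : R) • x ∈ ℳ (j + g) := SetLike.GradedSMul.smul_mem a.2 hx
    by_cases h : j = i
    · subst h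
      rw [DirectSum.decompose_of_mem_same 𝒜 a.2, DirectSum.decompose_of_mem_same ℳ hmem]
    · rw [DirectSum.decompose_of_mem_ne 𝒜 a.2 h,
        DirectSum.decompose_of_mem_ne ℳ hmem (by simpa using h), zero_smul]
  | add a b ha hb =>
    rw [add_smul, DirectSum.decompose_add, DirectSum.decompose_add, DirectSum.add_apply,
      DirectSum.add_apply, AddSubgroup.coe_add, AddSubgroup.coe_add, ha, hb, add_smul]

theorem IsGrSpecialRSubmodule.mem_colon_of_smul_mem {K : Submodule R M}
    (hK : IsGrSpecialRSubmodule 𝒜 ℳ K) {x : M} (hx : SetLike.IsHomogeneousElem ℳ x)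
    (hx₀ : ∀ r : R, r • x = 0 → r = 0) {r : R} (hr : r • x ∈ K) : r ∈ K.colon ⊤ := by
  classical
  obtain ⟨-, hKgr, hKspecial⟩ := hK
  obtain ⟨g, hxg⟩ := hx
  have hcomp (i : ι) : (DirectSum.decompose 𝒜 r i : R) ∈ K.colon ⊤ := by
    have hri : (DirectSum.decompose 𝒜 r i : R) • x ∈ K := by
      rw [← DirectSum.coe_decompose_smul_add_of_right_mem 𝒜 ℳ hxg r i]
      exact hKgr _ hr _
    exact Submodule.mem_colon.mpr fun m _ =>
      hKspecial _ x ⟨i, SetLike.coe_mem _⟩ ⟨g, hxg⟩ hri hx₀ m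
  rw [← DirectSum.sum_support_decompose 𝒜 r]
  exact Submodule.sum_mem _ fun i _ => hcomp i

theorem isGrSpecialRSubmodule_iff_colon_eq {K : Submodule R M} (hKtop : K ≠ ⊤)
    (hKgr : IsGradedSub ℳ K) :
    IsGrSpecialRSubmodule 𝒜 ℳ K ↔
      ∀ x : M, SetLike.IsHomogeneousElem ℳ x → (∀ r : R, r • x = 0 → r = 0) →
        (K.colon ⊤ : Set R) = {r : R | r • x ∈ K} := by
  constructor
  · intro hK x hx hx₀
    ext r
    exact ⟨fun hr => Submodule.mem_colon.mp hr x trivial,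
      fun hr => hK.mem_colon_of_smul_mem 𝒜 ℳ hx hx₀ hr⟩
  · refine fun h => ⟨hKtop, hKgr, fun a x _ hx hax hx₀ m => ?_⟩
    have ha : a ∈ (K.colon ⊤ : Set R) := (h x hx hx₀) ▸ hax
    exact Submodule.mem_colon.mp ha m trivial

theorem stmt14 (K : Submodule R M) (hKtop : K ≠ ⊤) (hKgr : IsGradedSub ℳ K) :
    (IsGrSpecialRSubmodule 𝒜 ℳ K ↔
      ∀ x : M, SetLike.IsHomogeneousElem ℳ x → (∀ r : R, r • x = 0 → r = 0) →
        Set.range (fun r : R => r • x) ∩ (K : Set M) =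
          (fun r : R => r • x) '' (K.colon ⊤ : Set R)) ∧
    (IsGrSpecialRSubmodule 𝒜 ℳ K ↔
      ∀ x : M, SetLike.IsHomogeneousElem ℳ x → (∀ r : R, r • x = 0 → r = 0) →
        (K.colon ⊤ : Set R) = {r : R | r • x ∈ K}) := by
  have h3 := isGrSpecialRSubmodule_iff_colon_eq 𝒜 ℳ hKtop hKgr
  refine ⟨h3.trans <| forall₂_congr fun x _ => forall_congr' fun hx₀ => ?_, h3⟩
  exact (Set.range_inter_eq_image_iff (smul_left_injective_of_forall_smul_eq_zero hx₀) _ _).symm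
end

section
/- Let K be a proper graded R-submodule of the graded R-module M. Then K is a graded special r-submodule of M if and only if the following holds: for every graded R-submodule N of M containing some element of h(M) not in T(M) and every graded ideal I of R with I·N ⊆ K, one has I ⊆ (K :_R M). -/
/-!
Setting: `R` is a commutative ring graded by a group `ι` (written additively),
`M` is a graded `R`-module.  `𝒜 g` / `ℳ g` are the homogeneous components,
`SetLike.Homogeneous` expresses membership in `h(R)` resp. `h(M)`.
-/

open Pointwise

variable {ι : Type*} [DecidableEq ι] [AddGroup ι]
variable {R : Type*} [CommRing R] {M : Type*} [AddCommGroup M] [Module R M]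
variable (𝒜 : ι → AddSubgroup R) (ℳ : ι → AddSubgroup M)
variable [GradedRing 𝒜] [DirectSum.Decomposition ℳ] [SetLike.GradedSMul 𝒜 ℳ]

/-! For the forward direction, the homogeneous components of `a ∈ I` lie in the graded ideal `I`,
so each of them multiplies the torsion-free homogeneous `x ∈ N` into `K` and hence lies in
`(K :_R M)`. For the converse, test the condition on `N = R x` and `I = R a`, which are graded
because they are generated by homogeneous elements, and satisfy `I • N = R (a • x) ⊆ K`. -/

open DirectSum SetLike Submodule

include 𝒜 in
theorem decompose_smul_mem_of_isHomogeneousElem {P : Submodule R M} (r : R) {x : M}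
    (hx : IsHomogeneousElem ℳ x) (hxP : x ∈ P) (i : ι) :
    (decompose ℳ (r • x) i : M) ∈ P := by
  classical
  obtain ⟨g, hg⟩ := hx
  rw [← sum_support_decompose 𝒜 r, Finset.sum_smul, decompose_sum, DFinsupp.finsetSum_apply,
    AddSubmonoidClass.coe_finsetSum]
  refine sum_mem fun j _ => ?_
  have hmem : (decompose 𝒜 r j : R) • x ∈ ℳ (j + g) := GradedSMul.smul_mem (decompose 𝒜 r j).2 hg
  rw [decompose_of_mem ℳ hmem, coe_of_apply]
  split_ifs
  · exact P.smul_mem _ hxP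
  · exact P.zero_mem

include 𝒜 in
theorem isGradedSub_span {s : Set M} (hs : ∀ x ∈ s, IsHomogeneousElem ℳ x) :
    IsGradedSub ℳ (span R s) := by
  intro y hy i
  obtain ⟨c, rfl⟩ := (Finsupp.mem_span_iff_linearCombination R s y).1 hy
  rw [Finsupp.linearCombination_apply, Finsupp.sum, decompose_sum, DFinsupp.finsetSum_apply,
    AddSubmonoidClass.coe_finsetSum]
  exact sum_mem fun z _ =>
    decompose_smul_mem_of_isHomogeneousElem 𝒜 ℳ (c z) (hs z z.2) (subset_span z.2) i

theorem isGradedIdl_span {s : Set R} (hs : ∀ a ∈ s, IsHomogeneousElem 𝒜 a) :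
    IsGradedIdl 𝒜 (Ideal.span s) :=
  fun _ ha i => Ideal.homogeneous_span 𝒜 s hs i ha

omit [GradedSMul 𝒜 ℳ] in
theorem IsGrSpecialRSubmodule.smul_mem_of_smul_le {K N : Submodule R M} {I : Ideal R}
    (hK : IsGrSpecialRSubmodule 𝒜 ℳ K) (hI : IsGradedIdl 𝒜 I) {x : M} (hxN : x ∈ N)
    (hx : IsHomogeneousElem ℳ x) (hxtf : ∀ r : R, r • x = 0 → r = 0) (hIN : I • N ≤ K)
    {a : R} (ha : a ∈ I) (m : M) : a • m ∈ K := by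
  classical
  rw [← sum_support_decompose 𝒜 a, Finset.sum_smul]
  exact sum_mem fun i _ => hK.2.2 _ x ⟨i, (decompose 𝒜 a i).2⟩ hx
    (hIN (smul_mem_smul (hI a ha i) hxN)) hxtf m

theorem stmt15 (K : Submodule R M) (hKtop : K ≠ ⊤) (hKgr : IsGradedSub ℳ K) :
    IsGrSpecialRSubmodule 𝒜 ℳ K ↔
      ∀ (N : Submodule R M) (I : Ideal R), IsGradedSub ℳ N → IsGradedIdl 𝒜 I →
        (∃ x ∈ N, SetLike.IsHomogeneousElem ℳ x ∧ ∀ r : R, r • x = 0 → r = 0) →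
        I • N ≤ K → ∀ a ∈ I, ∀ m : M, a • m ∈ K := by
  refine ⟨fun hK N I _ hI ⟨x, hxN, hx, hxtf⟩ hIN a ha m =>
    IsGrSpecialRSubmodule.smul_mem_of_smul_le 𝒜 ℳ hK hI hxN hx hxtf hIN ha m, ?_⟩
  refine fun h => ⟨hKtop, hKgr, fun a x ha hx haxK hxtf m => ?_⟩
  have hspan : (Ideal.span {a} • span R {x} : Submodule R M) ≤ K := by
    rw [span_smul_span, Set.singleton_smul_singleton, span_singleton_le_iff_mem]
    exact haxK
  exact h _ _ (isGradedSub_span 𝒜 ℳ (by simpa using hx)) (isGradedIdl_span 𝒜 (by simpa using ha))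
    ⟨x, mem_span_singleton_self x, hx, hxtf⟩ hspan a (Ideal.mem_span_singleton_self a) m
end

section
/- Let K be a graded special r-submodule of the graded R-module M and let r ∈ h(R) with r ∉ (K :_R M). Then (K :_M r) = {m ∈ M : r·m ∈ K} is a graded special r-submodule of M. -/
/-!
Setting: `R` is a commutative ring graded by a group `ι` (written additively),
`M` is a graded `R`-module.  `𝒜 g` / `ℳ g` are the homogeneous components,
`SetLike.IsHomogeneousElem` expresses membership in `h(R)` resp. `h(M)`.
-/

open Pointwise

variable {ι : Type*} [DecidableEq ι] [AddGroup ι]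
variable {R : Type*} [CommRing R] {M : Type*} [AddCommGroup M] [Module R M]
variable (𝒜 : ι → AddSubgroup R) (ℳ : ι → AddSubgroup M)
variable [GradedRing 𝒜] [DirectSum.Decomposition ℳ] [SetLike.GradedSMul 𝒜 ℳ]

/-- The residual `(K :_M r) = {m ∈ M : r • m ∈ K}` as a submodule of `M`. -/
def colonMod (K : Submodule R M) (r : R) : Submodule R M where
  carrier := {m : M | r • m ∈ K}
  add_mem' := by
    intro x y hx hy
    simp only [Set.mem_setOf_eq, smul_add] at *
    exact K.add_mem hx hy
  zero_mem' := by simp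
  smul_mem' := by
    intro c x hx
    simp only [Set.mem_setOf_eq] at *
    rw [smul_comm]
    exact K.smul_mem c hx

omit [GradedRing 𝒜] in
theorem coe_decompose_smul_add_of_left_mem {g : ι} {r : R} (hr : r ∈ 𝒜 g) (x : M) (i : ι) :
    (DirectSum.decompose ℳ (r • x) (g + i) : M) = r • (DirectSum.decompose ℳ x i : M) := by
  induction x using DirectSum.Decomposition.inductionOn ℳ with
  | zero => simp
  | @homogeneous j m =>
    obtain ⟨m, hm⟩ := m
    have hrm : r • m ∈ ℳ (g + j) := SetLike.GradedSMul.smul_mem hr hm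
    by_cases hji : j = i
    · subst hji
      rw [DirectSum.decompose_of_mem_same ℳ hrm, DirectSum.decompose_of_mem_same ℳ hm]
    · rw [DirectSum.decompose_of_mem_ne ℳ hrm (by simpa using hji),
        DirectSum.decompose_of_mem_ne ℳ hm hji, smul_zero]
  | add x y hx hy =>
    simp only [smul_add, DirectSum.decompose_add, DirectSum.add_apply, AddSubgroup.coe_add, hx, hy]

theorem mem_colonMod {K : Submodule R M} {r : R} {m : M} : m ∈ colonMod K r ↔ r • m ∈ K :=
  Iff.rfl

theorem colonMod_ne_top {K : Submodule R M} {r : R} (hrK : ¬ ∀ m : M, r • m ∈ K) :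
    colonMod K r ≠ ⊤ := fun h ↦ hrK fun _ ↦ mem_colonMod.mp (h ▸ Submodule.mem_top)

omit [GradedRing 𝒜] in
theorem IsGradedSub.colonMod {K : Submodule R M} (hK : IsGradedSub ℳ K) {r : R}
    (hr : SetLike.IsHomogeneousElem 𝒜 r) : IsGradedSub ℳ (colonMod K r) := by
  obtain ⟨g, hrg⟩ := hr
  intro x hx i
  rw [mem_colonMod, ← coe_decompose_smul_add_of_left_mem 𝒜 ℳ hrg]
  exact hK (r • x) hx (g + i)

omit [SetLike.GradedSMul 𝒜 ℳ] in
theorem IsGrSpecialRSubmodule.smul_mem_colonMod {K : Submodule R M}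
    (hK : IsGrSpecialRSubmodule 𝒜 ℳ K) {r : R} (hr : SetLike.IsHomogeneousElem 𝒜 r)
    {a : R} {x : M} (ha : SetLike.IsHomogeneousElem 𝒜 a) (hx : SetLike.IsHomogeneousElem ℳ x)
    (hax : a • x ∈ colonMod K r) (hann : ∀ s : R, s • x = 0 → s = 0) (m : M) :
    a • m ∈ colonMod K r := by
  have harx : (a * r) • x ∈ K := by rwa [mul_comm, mul_smul]
  have harm := hK.2.2 (a * r) x (ha.mul hr) hx harx hann m
  rwa [mem_colonMod, smul_smul, mul_comm]

theorem stmt16 (K : Submodule R M) (hK : IsGrSpecialRSubmodule 𝒜 ℳ K)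
    (r : R) (hr : SetLike.IsHomogeneousElem 𝒜 r) (hrK : ¬ ∀ m : M, r • m ∈ K) :
    IsGrSpecialRSubmodule 𝒜 ℳ (colonMod K r) :=
  ⟨colonMod_ne_top hrK, hK.2.1.colonMod 𝒜 ℳ hr,
    fun _ _ ha hx hax hann ↦ hK.smul_mem_colonMod 𝒜 ℳ hr ha hx hax hann⟩
end

section
/- Suppose the zero submodule {0} is the only graded special r-submodule of the graded R-module M and M is homogeneous faithful (r·M ≠ {0} for every nonzero r ∈ h(R)). Then M is homogeneous torsion free, i.e., whenever r ∈ h(R) and x ∈ h(M) satisfy r·x = 0, then r = 0 or x = 0. -/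
/-!
Setting: `R` is a commutative ring graded by a group `ι` (written additively),
`M` is a graded `R`-module.  `𝒜 g` / `ℳ g` are the homogeneous components,
`SetLike.Homogeneous` expresses membership in `h(R)` resp. `h(M)`.
-/

open Pointwise

variable {ι : Type*} [DecidableEq ι] [AddGroup ι]
variable {R : Type*} [CommRing R] {M : Type*} [AddCommGroup M] [Module R M]
variable (𝒜 : ι → AddSubgroup R) (ℳ : ι → AddSubgroup M)
variable [GradedRing 𝒜] [DirectSum.Decomposition ℳ] [SetLike.GradedSMul 𝒜 ℳ]

/-! For a homogeneous `r ≠ 0`, the annihilator `Ann_M(r)` is a graded special r-submodule: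
it is proper because `M` is homogeneous faithful, graded because multiplication by `r` shifts
homogeneous components by `deg r`, and special because `r • a • x = 0` with `Ann_R(x) = 0`
forces `r * a = 0`, i.e. `a • M ⊆ Ann_M(r)`. By hypothesis it is therefore zero. -/

section

variable {ιA ιM A N σA σN : Type*} [SetLike σA A] [AddCommMonoid N] [SetLike σN N]
  [AddSubmonoidClass σN N] [DistribSMul A N] [DecidableEq ιM] [VAdd ιA ιM]
  [IsLeftCancelVAdd ιA ιM] (𝒜 : ιA → σA) (𝒩 : ιM → σN) [DirectSum.Decomposition 𝒩]
  [SetLike.GradedSMul 𝒜 𝒩]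

theorem coe_decompose_smul_of_mem_s19 {g : ιA} {a : A} (ha : a ∈ 𝒜 g) (n : N) (i : ιM) :
    (DirectSum.decompose 𝒩 (a • n) (g +ᵥ i) : N) = a • (DirectSum.decompose 𝒩 n i : N) := by
  induction n using DirectSum.Decomposition.inductionOn 𝒩 with
  | zero => simp
  | @homogeneous j n =>
    have hmem : a • (n : N) ∈ 𝒩 (g +ᵥ j) := SetLike.GradedSMul.smul_mem ha n.2
    rcases eq_or_ne i j with rfl | hij
    · rw [DirectSum.decompose_of_mem_same 𝒩 n.2, DirectSum.decompose_of_mem_same 𝒩 hmem]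
    · rw [DirectSum.decompose_of_mem_ne 𝒩 n.2 hij.symm,
        DirectSum.decompose_of_mem_ne 𝒩 hmem (mt (IsLeftCancelVAdd.left_cancel g j i) hij.symm),
        smul_zero]
  | add x y hx hy => simp only [smul_add, DirectSum.decompose_add, DirectSum.add_apply,
      AddMemClass.coe_add, hx, hy]

theorem smul_decompose_eq_zero {g : ιA} {a : A} (ha : a ∈ 𝒜 g) {n : N} (hn : a • n = 0)
    (i : ιM) : a • (DirectSum.decompose 𝒩 n i : N) = 0 := by
  rw [← coe_decompose_smul_of_mem_s19 𝒜 𝒩 ha, hn, DirectSum.decompose_zero, DirectSum.zero_apply,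
    ZeroMemClass.coe_zero]

end

theorem isGrSpecialRSubmodule_torsionBy {ι R M : Type*} [DecidableEq ι] [AddGroup ι] [CommRing R]
    [AddCommGroup M] [Module R M] (𝒜 : ι → AddSubgroup R) (ℳ : ι → AddSubgroup M)
    [DirectSum.Decomposition ℳ] [SetLike.GradedSMul 𝒜 ℳ] {r : R}
    (hr : SetLike.IsHomogeneousElem 𝒜 r) (hrM : ∃ m : M, r • m ≠ 0) :
    IsGrSpecialRSubmodule 𝒜 ℳ (Submodule.torsionBy R M r) := by
  obtain ⟨g, hg⟩ := hr
  simp only [IsGrSpecialRSubmodule, IsGradedSub, Submodule.mem_torsionBy_iff]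
  refine ⟨?_, fun m hm i => smul_decompose_eq_zero 𝒜 ℳ hg hm i, ?_⟩
  · obtain ⟨m, hm⟩ := hrM
    exact fun htop => hm ((Submodule.mem_torsionBy_iff _ _).mp (htop ▸ Submodule.mem_top))
  · intro a x _ _ hax hann m
    have hra : r * a = 0 := hann _ (by rw [mul_smul, hax])
    rw [← mul_smul, hra, zero_smul]

theorem stmt19
    (h : ∀ K : Submodule R M, IsGrSpecialRSubmodule 𝒜 ℳ K ↔ K = ⊥)
    (hfaith : ∀ r : R, SetLike.IsHomogeneousElem 𝒜 r → r ≠ 0 → ∃ m : M, r • m ≠ 0) :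
    ∀ (r : R) (x : M), SetLike.IsHomogeneousElem 𝒜 r → SetLike.IsHomogeneousElem ℳ x →
      r • x = 0 → r = 0 ∨ x = 0 := by
  intro r x hr _ hrx
  refine or_iff_not_imp_left.mpr fun hr0 => ?_
  have hbot : Submodule.torsionBy R M r = ⊥ :=
    (h _).mp (isGrSpecialRSubmodule_torsionBy 𝒜 ℳ hr (hfaith r hr hr0))
  simpa [hbot] using (Submodule.mem_torsionBy_iff r x).mpr hrx
end
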